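/- arXiv:2311.02045 — 14 statements merged into one kernel-verified Lean document; each statement's English description precedes it below -/
import Mathlib

section
/- Let P be a behavior in the CHSH Bell scenario admitting a local-hidden-variable model. If P(0,0|0,0) = 0, P(1,1|0,1) = 0, and P(1,1|1,0) = 0, then P(1,1|1,1) = 0. (Hardy's paradox: the zero-probability constraints force the success probability to vanish in any LHV model.) -/
/-! In a local model every hidden variable `l` with positive weight fixes all four answers
`f l x`, `g l y`, and the three vanishing probabilities forbid the corresponding answer pairs for
that `l`. No deterministic strategy avoids those three pairs while answering `(1, 1)` on inputs
`(1, 1)`: `f l 1 = 1` forces `g l 0 = 0`, `g l 1 = 1` forces `f l 0 = 0`, and then `P 0 0 0 0`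
would see `l`. -/

lemma Finset.sum_mul_ite_mul_ite_eq_zero_iff {ι α β : Type*} [Fintype ι]
    [DecidableEq α] [DecidableEq β] {w : ι → ℝ} (hw : ∀ i, 0 ≤ w i)
    (f : ι → α) (g : ι → β) (a : α) (b : β) :
    ∑ i, w i * (if f i = a then (1 : ℝ) else 0) * (if g i = b then (1 : ℝ) else 0) = 0 ↔
      ∀ i, f i = a → g i = b → w i = 0 := by
  have hterm : ∀ i, w i * (if f i = a then (1 : ℝ) else 0) * (if g i = b then (1 : ℝ) else 0) =
      if f i = a ∧ g i = b then w i else 0 := fun i => by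
    split_ifs <;> simp_all
  simp only [hterm]
  rw [Finset.sum_eq_zero_iff_of_nonneg fun i _ => by split_ifs <;> simp [hw i]]
  simp only [Finset.mem_univ, true_implies, ite_eq_right_iff, and_imp]

lemma hardy_deterministic (α β : Fin 2 → Fin 2)
    (h00 : α 0 = 0 → β 0 ≠ 0) (h01 : α 0 = 1 → β 1 ≠ 1) (h10 : α 1 = 1 → β 0 ≠ 1) :
    α 1 = 1 → β 1 ≠ 1 := by
  intro hα hβ
  have hβ0 : β 0 = 0 := by have := h10 hα; omega
  have hα0 : α 0 = 0 := by by_contra h; exact h01 (by omega) hβ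
  exact h00 hα0 hβ0

theorem stmt_0_general
    (P : Fin 2 → Fin 2 → Fin 2 → Fin 2 → ℝ)
    (Λ : Type) [Fintype Λ]
    (w : Λ → ℝ) (f g : Λ → Fin 2 → Fin 2)
    (hw : ∀ l, 0 ≤ w l)
    (hP : ∀ a b x y, P a b x y =
      ∑ l, w l * (if f l x = a then (1 : ℝ) else 0) * (if g l y = b then (1 : ℝ) else 0))
    (h1 : P 0 0 0 0 = 0) (h2 : P 1 1 0 1 = 0) (h3 : P 1 1 1 0 = 0) :
    P 1 1 1 1 = 0 := by
  simp only [hP, Finset.sum_mul_ite_mul_ite_eq_zero_iff hw] at h1 h2 h3 ⊢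
  intro l hf hg
  by_contra hwl
  exact hardy_deterministic (f l) (g l) (fun h h' => hwl (h1 l h h'))
    (fun h h' => hwl (h2 l h h')) (fun h h' => hwl (h3 l h h')) hf hg

/-- CHSH Bell scenario: `P a b x y` is the probability of outcomes `(a, b)`
given inputs `(x, y)`, with an LHV model given by a finite hidden-variable
type `Λ`, weights `w`, and deterministic response functions `f` (Alice)
and `g` (Bob). -/
theorem stmt_0
    (P : Fin 2 → Fin 2 → Fin 2 → Fin 2 → ℝ)
    (hPpos : ∀ a b x y, 0 ≤ P a b x y)
    (hPnorm : ∀ x y, ∑ a, ∑ b, P a b x y = 1)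
    (Λ : Type) [Fintype Λ]
    (w : Λ → ℝ) (f g : Λ → Fin 2 → Fin 2)
    (hw : ∀ l, 0 ≤ w l) (hw1 : ∑ l, w l = 1)
    (hP : ∀ a b x y, P a b x y =
      ∑ l, w l * (if f l x = a then (1 : ℝ) else 0) * (if g l y = b then (1 : ℝ) else 0))
    (h1 : P 0 0 0 0 = 0) (h2 : P 1 1 0 1 = 0) (h3 : P 1 1 1 0 = 0) :
    P 1 1 1 1 = 0 :=
  stmt_0_general P Λ w f g hw hP h1 h2 h3
end

section
/- Let P be a behavior in the CHSH Bell scenario admitting a local-hidden-variable model. If P(1,1|0,1) = 0 and P(1,1|1,0) = 0, then P(1,1|1,1) ≤ P(0,0|0,0). (Cabello–Liang–Li argument: the degree of success q − p = P(1,1|1,1) − P(0,0|0,0) is nonpositive for every LHV model.) -/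
/-!
For a deterministic strategy, if Alice and Bob both answer `1` on input `1`, then either they
both answer `0` on input `0`, or one of the events `(1,1|0,1)`, `(1,1|1,0)` occurs. Averaging over
the hidden variable gives Hardy's inequality
`P(1,1|1,1) ≤ P(0,0|0,0) + P(1,1|0,1) + P(1,1|1,0)` for every LHV model, and the two vanishing
probabilities reduce it to the claim.
-/

open Finset

namespace CHSH

variable {Λ : Type} [Fintype Λ]

noncomputable def lhvProb (w : Λ → ℝ) (f g : Λ → Fin 2 → Fin 2) (a b x y : Fin 2) : ℝ :=
  ∑ l, w l * (if f l x = a then (1 : ℝ) else 0) * (if g l y = b then (1 : ℝ) else 0)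

theorem deterministic_hardy (a₀ a₁ b₀ b₁ : Fin 2) :
    (if a₁ = 1 then (1 : ℝ) else 0) * (if b₁ = 1 then 1 else 0) ≤
      (if a₀ = 0 then 1 else 0) * (if b₀ = 0 then 1 else 0) +
        (if a₀ = 1 then 1 else 0) * (if b₁ = 1 then 1 else 0) +
        (if a₁ = 1 then 1 else 0) * (if b₀ = 1 then 1 else 0) := by
  fin_cases a₀ <;> fin_cases a₁ <;> fin_cases b₀ <;> fin_cases b₁ <;> norm_num

theorem lhvProb_hardy {w : Λ → ℝ} (hw : ∀ l, 0 ≤ w l) (f g : Λ → Fin 2 → Fin 2) :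
    lhvProb w f g 1 1 1 1 ≤
      lhvProb w f g 0 0 0 0 + lhvProb w f g 1 1 0 1 + lhvProb w f g 1 1 1 0 := by
  simp only [lhvProb, ← sum_add_distrib]
  refine sum_le_sum fun l _ => ?_
  calc w l * (if f l 1 = 1 then (1 : ℝ) else 0) * (if g l 1 = 1 then 1 else 0)
      = w l * ((if f l 1 = 1 then (1 : ℝ) else 0) * (if g l 1 = 1 then 1 else 0)) := mul_assoc ..
    _ ≤ w l * ((if f l 0 = 0 then 1 else 0) * (if g l 0 = 0 then 1 else 0) +
          (if f l 0 = 1 then 1 else 0) * (if g l 1 = 1 then 1 else 0) +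
          (if f l 1 = 1 then 1 else 0) * (if g l 0 = 1 then 1 else 0)) :=
        mul_le_mul_of_nonneg_left (deterministic_hardy ..) (hw l)
    _ = _ := by ring

end CHSH

theorem stmt_1_general
    (P : Fin 2 → Fin 2 → Fin 2 → Fin 2 → ℝ)
    (Λ : Type) [Fintype Λ]
    (w : Λ → ℝ) (f g : Λ → Fin 2 → Fin 2)
    (hw : ∀ l, 0 ≤ w l)
    (hP : ∀ a b x y, P a b x y =
      ∑ l, w l * (if f l x = a then (1 : ℝ) else 0) * (if g l y = b then (1 : ℝ) else 0))
    (h2 : P 1 1 0 1 = 0) (h3 : P 1 1 1 0 = 0) :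
    P 1 1 1 1 ≤ P 0 0 0 0 := by
  have hP' : ∀ a b x y, P a b x y = CHSH.lhvProb w f g a b x y := hP
  have hardy := CHSH.lhvProb_hardy hw f g
  rw [← hP', ← hP', ← hP', ← hP'] at hardy
  linarith

/-- CHSH Bell scenario: `P a b x y` is the probability of outcomes `(a, b)`
given inputs `(x, y)`, with an LHV model given by a finite hidden-variable
type `Λ`, weights `w`, and deterministic response functions `f` (Alice)
and `g` (Bob). -/
theorem stmt_1
    (P : Fin 2 → Fin 2 → Fin 2 → Fin 2 → ℝ)
    (hPpos : ∀ a b x y, 0 ≤ P a b x y)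
    (hPnorm : ∀ x y, ∑ a, ∑ b, P a b x y = 1)
    (Λ : Type) [Fintype Λ]
    (w : Λ → ℝ) (f g : Λ → Fin 2 → Fin 2)
    (hw : ∀ l, 0 ≤ w l) (hw1 : ∑ l, w l = 1)
    (hP : ∀ a b x y, P a b x y =
      ∑ l, w l * (if f l x = a then (1 : ℝ) else 0) * (if g l y = b then (1 : ℝ) else 0))
    (h2 : P 1 1 0 1 = 0) (h3 : P 1 1 1 0 = 0) :
    P 1 1 1 1 ≤ P 0 0 0 0 :=
  stmt_1_general P Λ w f g hw hP h2 h3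
end

section
/- Let P be a behavior in the CHSH Bell scenario admitting a local-hidden-variable model. If P(0,0|0,0) = 0 and P(1,1|1,0) = 0, then P(1,1|1,1) ≤ P(1,1|0,1). (Failure-of-transitivity-of-implications (FTI) argument: the degree of success q − r = P(1,1|1,1) − P(1,1|0,1) is nonpositive for every LHV model.) -/
/-!
Each hidden variable of positive weight answers deterministically, so a vanishing probability
forbids its outcome pair for every such variable. If a variable answers `a = 1` on `x = 1` and
`b = 1` on `y = 1`, then `P(1,1|1,0) = 0` forces Bob's answer on `y = 0` to be `0`, and then
`P(0,0|0,0) = 0` forces Alice's answer on `x = 0` to be `1`. Hence every variable contributing to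
`P(1,1|1,1)` also contributes to `P(1,1|0,1)`.
-/

open Finset

section LHV

variable {Λ X Y α β : Type*} [Fintype Λ] [DecidableEq α] [DecidableEq β]

def lhvBehavior (w : Λ → ℝ) (f : Λ → X → α) (g : Λ → Y → β) (a : α) (b : β) (x : X) (y : Y) :
    ℝ :=
  ∑ l, w l * (if f l x = a then (1 : ℝ) else 0) * (if g l y = b then (1 : ℝ) else 0)

variable {w : Λ → ℝ} {f : Λ → X → α} {g : Λ → Y → β}

lemma lhvBehavior_eq_sum_ite (a : α) (b : β) (x : X) (y : Y) :
    lhvBehavior w f g a b x y = ∑ l, if f l x = a ∧ g l y = b then w l else 0 := by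
  refine sum_congr rfl fun l _ => ?_
  rw [mul_assoc, ite_zero_mul_ite_zero, one_mul, mul_ite, mul_one, mul_zero]

lemma lhvBehavior_eq_zero_iff (hw : ∀ l, 0 ≤ w l) {a : α} {b : β} {x : X} {y : Y} :
    lhvBehavior w f g a b x y = 0 ↔ ∀ l, 0 < w l → ¬(f l x = a ∧ g l y = b) := by
  rw [lhvBehavior_eq_sum_ite, sum_eq_zero_iff_of_nonneg fun l _ => by split_ifs <;> simp [hw l]]
  refine forall_congr' fun l => ?_
  split_ifs with h
  · simpa [h] using (hw l).ge_iff_eq'.symm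
  · simp [h]

lemma lhvBehavior_le_of_imp (hw : ∀ l, 0 ≤ w l) {a a' : α} {b b' : β} {x x' : X} {y y' : Y}
    (h : ∀ l, 0 < w l → f l x = a ∧ g l y = b → f l x' = a' ∧ g l y' = b') :
    lhvBehavior w f g a b x y ≤ lhvBehavior w f g a' b' x' y' := by
  simp only [lhvBehavior_eq_sum_ite]
  refine sum_le_sum fun l _ => ?_
  rcases (hw l).eq_or_lt with hl | hl
  · simp [← hl]
  · split_ifs with hab hab'
    · rfl
    · exact absurd (h l hl hab) hab'
    · exact hl.le
    · rfl

end LHV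

theorem stmt_2_general
    (P : Fin 2 → Fin 2 → Fin 2 → Fin 2 → ℝ)
    (Λ : Type) [Fintype Λ]
    (w : Λ → ℝ) (f g : Λ → Fin 2 → Fin 2)
    (hw : ∀ l, 0 ≤ w l)
    (hP : ∀ a b x y, P a b x y =
      ∑ l, w l * (if f l x = a then (1 : ℝ) else 0) * (if g l y = b then (1 : ℝ) else 0))
    (h1 : P 0 0 0 0 = 0) (h3 : P 1 1 1 0 = 0) :
    P 1 1 1 1 ≤ P 1 1 0 1 := by
  obtain rfl : P = lhvBehavior w f g := by ext; exact hP ..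
  have forbid00 := (lhvBehavior_eq_zero_iff hw).mp h1
  have forbid11 := (lhvBehavior_eq_zero_iff hw).mp h3
  refine lhvBehavior_le_of_imp hw fun l hl ⟨hf1, hg1⟩ => ⟨?_, hg1⟩
  have hg0 : g l 0 = 0 := by have := forbid11 l hl; omega
  have := forbid00 l hl
  omega

/-- CHSH Bell scenario: `P a b x y` is the probability of outcomes `(a, b)`
given inputs `(x, y)`, with an LHV model given by a finite hidden-variable
type `Λ`, weights `w`, and deterministic response functions `f` (Alice)
and `g` (Bob). -/
theorem stmt_2
    (P : Fin 2 → Fin 2 → Fin 2 → Fin 2 → ℝ)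
    (hPpos : ∀ a b x y, 0 ≤ P a b x y)
    (hPnorm : ∀ x y, ∑ a, ∑ b, P a b x y = 1)
    (Λ : Type) [Fintype Λ]
    (w : Λ → ℝ) (f g : Λ → Fin 2 → Fin 2)
    (hw : ∀ l, 0 ≤ w l) (hw1 : ∑ l, w l = 1)
    (hP : ∀ a b x y, P a b x y =
      ∑ l, w l * (if f l x = a then (1 : ℝ) else 0) * (if g l y = b then (1 : ℝ) else 0))
    (h1 : P 0 0 0 0 = 0) (h3 : P 1 1 1 0 = 0) :
    P 1 1 1 1 ≤ P 1 1 0 1 :=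
  stmt_2_general P Λ w f g hw hP h1 h3
end

section
/- Every behavior P in the CHSH Bell scenario admitting a local-hidden-variable model satisfies the Clauser–Horne inequality P(1,1|1,1) − P(1,1|1,0) − P(1,1|0,1) − P(0,0|0,0) ≤ 0. -/
/-! For a single hidden variable the outcomes are fixed, and checking the sixteen deterministic
strategies shows that the Clauser–Horne expression is `0` or `-1`. An LHV behavior is a
nonnegative combination of deterministic ones, and the expression is linear in the behavior. -/

theorem clauserHorne_deterministic_nonpos (a b : Fin 2 → Fin 2) :
    (if a 1 = 1 then (1 : ℝ) else 0) * (if b 1 = 1 then (1 : ℝ) else 0)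
      - (if a 1 = 1 then (1 : ℝ) else 0) * (if b 0 = 1 then (1 : ℝ) else 0)
      - (if a 0 = 1 then (1 : ℝ) else 0) * (if b 1 = 1 then (1 : ℝ) else 0)
      - (if a 0 = 0 then (1 : ℝ) else 0) * (if b 0 = 0 then (1 : ℝ) else 0) ≤ 0 := by
  split_ifs <;> norm_num <;> omega

theorem stmt_3_general
    (P : Fin 2 → Fin 2 → Fin 2 → Fin 2 → ℝ)
    (Λ : Type) [Fintype Λ]
    (w : Λ → ℝ) (f g : Λ → Fin 2 → Fin 2)
    (hw : ∀ l, 0 ≤ w l)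
    (hP : ∀ a b x y, P a b x y =
      ∑ l, w l * (if f l x = a then (1 : ℝ) else 0) * (if g l y = b then (1 : ℝ) else 0))
     :
    P 1 1 1 1 - P 1 1 1 0 - P 1 1 0 1 - P 0 0 0 0 ≤ 0 := by
  simp only [hP, ← Finset.sum_sub_distrib]
  refine Finset.sum_nonpos fun l _ => ?_
  have := mul_nonpos_of_nonneg_of_nonpos (hw l) (clauserHorne_deterministic_nonpos (f l) (g l))
  linarith

/-- CHSH Bell scenario: `P a b x y` is the probability of outcomes `(a, b)`
given inputs `(x, y)`, with an LHV model given by a finite hidden-variable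
type `Λ`, weights `w`, and deterministic response functions `f` (Alice)
and `g` (Bob). -/
theorem stmt_3
    (P : Fin 2 → Fin 2 → Fin 2 → Fin 2 → ℝ)
    (hPpos : ∀ a b x y, 0 ≤ P a b x y)
    (hPnorm : ∀ x y, ∑ a, ∑ b, P a b x y = 1)
    (Λ : Type) [Fintype Λ]
    (w : Λ → ℝ) (f g : Λ → Fin 2 → Fin 2)
    (hw : ∀ l, 0 ≤ w l) (hw1 : ∑ l, w l = 1)
    (hP : ∀ a b x y, P a b x y =
      ∑ l, w l * (if f l x = a then (1 : ℝ) else 0) * (if g l y = b then (1 : ℝ) else 0))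
     :
    P 1 1 1 1 - P 1 1 1 0 - P 1 1 0 1 - P 0 0 0 0 ≤ 0 :=
  stmt_3_general P Λ w f g hw hP
end

section
/- Let ε ≥ 0 and let P be a behavior in the CHSH Bell scenario admitting a local-hidden-variable model. If P(1,1|0,1) ≤ ε and P(1,1|1,0) ≤ ε, then P(1,1|1,1) − P(0,0|0,0) ≤ 2ε. (Relaxed Cabello–Liang–Li argument: generalized degree of success q − p − 2ε is nonpositive for LHV models when the zero-probability constraints are satisfied only up to tolerance ε.) -/
/-!
Each deterministic strategy satisfies the Cabello–Hardy implication: if it outputs `(1,1)` on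
inputs `(1,1)`, then it outputs `(1,1)` on `(0,1)`, or `(1,1)` on `(1,0)`, or `(0,0)` on `(0,0)`.
Averaging over the hidden variable gives
`P(1,1|1,1) ≤ P(0,0|0,0) + P(1,1|0,1) + P(1,1|1,0)`, and the two tolerances bound the last two terms.
-/

open Finset

def detProb (f g : Fin 2 → Fin 2) (a b x y : Fin 2) : ℝ :=
  (if f x = a then 1 else 0) * (if g y = b then 1 else 0)

def lhvProb {Λ : Type*} [Fintype Λ] (w : Λ → ℝ) (f g : Λ → Fin 2 → Fin 2)
    (a b x y : Fin 2) : ℝ :=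
  ∑ l, w l * detProb (f l) (g l) a b x y

lemma detProb_cabello (f g : Fin 2 → Fin 2) :
    detProb f g 1 1 1 1 ≤ detProb f g 0 0 0 0 + detProb f g 1 1 0 1 + detProb f g 1 1 1 0 := by
  unfold detProb
  generalize f 0 = a₀, f 1 = a₁, g 0 = b₀, g 1 = b₁
  fin_cases a₀ <;> fin_cases a₁ <;> fin_cases b₀ <;> fin_cases b₁ <;> norm_num

lemma lhvProb_cabello {Λ : Type*} [Fintype Λ] {w : Λ → ℝ} (hw : ∀ l, 0 ≤ w l)
    (f g : Λ → Fin 2 → Fin 2) :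
    lhvProb w f g 1 1 1 1 ≤
      lhvProb w f g 0 0 0 0 + lhvProb w f g 1 1 0 1 + lhvProb w f g 1 1 1 0 := by
  simp only [lhvProb, ← sum_add_distrib, ← mul_add]
  exact sum_le_sum fun l _ => mul_le_mul_of_nonneg_left (detProb_cabello (f l) (g l)) (hw l)

theorem stmt_5_general
    (P : Fin 2 → Fin 2 → Fin 2 → Fin 2 → ℝ)
    (Λ : Type) [Fintype Λ]
    (w : Λ → ℝ) (f g : Λ → Fin 2 → Fin 2)
    (hw : ∀ l, 0 ≤ w l)
    (hP : ∀ a b x y, P a b x y =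
      ∑ l, w l * (if f l x = a then (1 : ℝ) else 0) * (if g l y = b then (1 : ℝ) else 0))
    (ε : ℝ) (h2 : P 1 1 0 1 ≤ ε) (h3 : P 1 1 1 0 ≤ ε) :
    P 1 1 1 1 - P 0 0 0 0 ≤ 2 * ε := by
  have hP_lhv : ∀ a b x y, P a b x y = lhvProb w f g a b x y := by
    simp only [hP, lhvProb, detProb, mul_assoc, implies_true]
  have hcabello := lhvProb_cabello hw f g
  rw [← hP_lhv, ← hP_lhv, ← hP_lhv, ← hP_lhv] at hcabello
  linarith

/-- CHSH Bell scenario: `P a b x y` is the probability of outcomes `(a, b)`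
given inputs `(x, y)`, with an LHV model given by a finite hidden-variable
type `Λ`, weights `w`, and deterministic response functions `f` (Alice)
and `g` (Bob). -/
theorem stmt_5
    (P : Fin 2 → Fin 2 → Fin 2 → Fin 2 → ℝ)
    (hPpos : ∀ a b x y, 0 ≤ P a b x y)
    (hPnorm : ∀ x y, ∑ a, ∑ b, P a b x y = 1)
    (Λ : Type) [Fintype Λ]
    (w : Λ → ℝ) (f g : Λ → Fin 2 → Fin 2)
    (hw : ∀ l, 0 ≤ w l) (hw1 : ∑ l, w l = 1)
    (hP : ∀ a b x y, P a b x y =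
      ∑ l, w l * (if f l x = a then (1 : ℝ) else 0) * (if g l y = b then (1 : ℝ) else 0))
    (ε : ℝ) (hε : 0 ≤ ε) (h2 : P 1 1 0 1 ≤ ε) (h3 : P 1 1 1 0 ≤ ε) :
    P 1 1 1 1 - P 0 0 0 0 ≤ 2 * ε :=
  stmt_5_general P Λ w f g hw hP ε h2 h3
end

section
/- Let k ≥ 3 be odd, d ≥ 2, and let s^A, s^B : {0,1,…,k−1} → {0,1,…,d−1} be deterministic outcome assignments. Suppose that for every odd i with 1 ≤ i ≤ k−1 one has s^A_i ≤ s^B_{i−1} and s^A_{i−1} ≤ s^B_i, and for every even i with 1 ≤ i ≤ k−1 one has s^A_i ≥ s^B_{i−1} and s^A_{i−1} ≥ s^B_i. Then s^A_{k−1} < s^B_{k−1} implies s^A_0 < s^B_0. (Deterministic chain underlying the generalized Cabello–Liang–Li argument for odd k: the hypotheses force s^A_0 ≤ ⋯ ≤ s^B_{k−2} ≤ s^A_{k−1} < s^B_{k−1} ≤ s^A_{k−2} ≤ ⋯ ≤ s^B_0.) -/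
/-!
The constraints at the odd input `j + 1` and the even input `j + 2` give
`sA j ≤ sB (j+1) ≤ sA (j+2)` and `sB (j+2) ≤ sA (j+1) ≤ sB j`, so a strict inequality
`sA (j+2) < sB (j+2)` propagates down to `sA j < sB j`. Starting from the last input `k - 1`,
which is even, and descending two steps at a time reaches input `0`.
-/

theorem lt_of_lt_add_two {sA sB : ℕ → ℕ} {j : ℕ}
    (hA : sA j ≤ sB (j + 1)) (hB : sA (j + 1) ≤ sB j)
    (hA' : sB (j + 1) ≤ sA (j + 2)) (hB' : sB (j + 2) ≤ sA (j + 1))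
    (h : sA (j + 2) < sB (j + 2)) : sA j < sB j :=
  calc sA j ≤ sB (j + 1) := hA
    _ ≤ sA (j + 2) := hA'
    _ < sB (j + 2) := h
    _ ≤ sA (j + 1) := hB'
    _ ≤ sB j := hB

theorem lt_zero_of_lt_two_mul {sA sB : ℕ → ℕ} {m : ℕ}
    (hodd : ∀ n < m, sA (2 * n) ≤ sB (2 * n + 1) ∧ sA (2 * n + 1) ≤ sB (2 * n))
    (heven : ∀ n < m, sB (2 * n + 1) ≤ sA (2 * n + 2) ∧ sB (2 * n + 2) ≤ sA (2 * n + 1))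
    (h : sA (2 * m) < sB (2 * m)) : sA 0 < sB 0 := by
  induction m with
  | zero => simpa using h
  | succ n ih =>
    obtain ⟨hA, hB⟩ := hodd n n.lt_succ_self
    obtain ⟨hA', hB'⟩ := heven n n.lt_succ_self
    exact ih (fun i hi => hodd i (hi.trans n.lt_succ_self))
      (fun i hi => heven i (hi.trans n.lt_succ_self)) (lt_of_lt_add_two hA hB hA' hB' h)

theorem stmt_6_general (k : ℕ) (hkodd : Odd k)
    (sA sB : ℕ → ℕ)
    (hodd : ∀ i, 1 ≤ i → i ≤ k - 1 → Odd i → sA i ≤ sB (i - 1) ∧ sA (i - 1) ≤ sB i)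
    (heven : ∀ i, 1 ≤ i → i ≤ k - 1 → Even i → sB (i - 1) ≤ sA i ∧ sB i ≤ sA (i - 1))
    (h : sA (k - 1) < sB (k - 1)) :
    sA 0 < sB 0 := by
  obtain ⟨t, rfl⟩ := hkodd
  refine lt_zero_of_lt_two_mul (m := t) (fun n hn => ?_) (fun n hn => ?_) (by simpa using h)
  · have := hodd (2 * n + 1) (by omega) (by omega) (odd_two_mul_add_one n)
    simpa only [Nat.add_sub_cancel] using this.symm
  · have := heven (2 * n + 2) (by omega) (by omega) ⟨n + 1, by ring⟩
    simpa only [Nat.add_succ_sub_one] using this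

/-- Deterministic chain underlying the generalized Cabello–Liang–Li argument, odd `k`:
`sA i` and `sB i` are the deterministic outcomes (in `{0,…,d−1}`) assigned to
input `i ∈ {0,…,k−1}` of Alice and Bob, respectively. -/
theorem stmt_6 (k d : ℕ) (hk : 3 ≤ k) (hkodd : Odd k) (hd : 2 ≤ d)
    (sA sB : ℕ → ℕ)
    (hsA : ∀ i, i < k → sA i < d) (hsB : ∀ i, i < k → sB i < d)
    (hodd : ∀ i, 1 ≤ i → i ≤ k - 1 → Odd i → sA i ≤ sB (i - 1) ∧ sA (i - 1) ≤ sB i)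
    (heven : ∀ i, 1 ≤ i → i ≤ k - 1 → Even i → sB (i - 1) ≤ sA i ∧ sB i ≤ sA (i - 1))
    (h : sA (k - 1) < sB (k - 1)) :
    sA 0 < sB 0 :=
  stmt_6_general k hkodd sA sB hodd heven h
end

section
/- Let k ≥ 2 be even, d ≥ 2, and let s^A, s^B : {0,1,…,k−1} → {0,1,…,d−1} be deterministic outcome assignments. Suppose that for every odd i with 1 ≤ i ≤ k−1 one has s^A_i ≤ s^B_{i−1} and s^A_{i−1} ≤ s^B_i, and for every even i with 1 ≤ i ≤ k−1 one has s^A_i ≥ s^B_{i−1} and s^A_{i−1} ≥ s^B_i. Then s^A_{k−1} > s^B_{k−1} implies s^A_0 < s^B_0. (Deterministic chain underlying the generalized Cabello–Liang–Li argument for even k: the hypotheses force s^A_0 ≤ ⋯ ≤ s^A_{k−2} ≤ s^B_{k−1} < s^A_{k−1} ≤ s^B_{k−2} ≤ ⋯ ≤ s^B_0.) -/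
/-!
On odd inputs `m` the constraints at `m` and `m - 1` give
`sB (m - 2) ≤ sA (m - 1) ≤ sB m` and `sA m ≤ sB (m - 1) ≤ sA (m - 2)`,
so a gap `sB m < sA m` propagates to `sB (m - 2) < sA (m - 2)`. Starting from the odd input
`k - 1` and descending to `m = 1`, the constraints at `1` turn the gap into `sA 0 < sB 0`.
-/

section

variable {α : Type*} [Preorder α] {k : ℕ} {sA sB : ℕ → α}

theorem sB_lt_sA_of_sB_lt_sA_add_two
    (hodd : ∀ i, 1 ≤ i → i ≤ k - 1 → Odd i → sA i ≤ sB (i - 1) ∧ sA (i - 1) ≤ sB i)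
    (heven : ∀ i, 1 ≤ i → i ≤ k - 1 → Even i → sB (i - 1) ≤ sA i ∧ sB i ≤ sA (i - 1))
    {j : ℕ} (hj : 2 * j + 3 < k) (h : sB (2 * j + 3) < sA (2 * j + 3)) :
    sB (2 * j + 1) < sA (2 * j + 1) := by
  obtain ⟨hA₃, hA₂⟩ := hodd (2 * j + 3) (by omega) (by omega) ⟨j + 1, by ring⟩
  obtain ⟨hB₁, hB₂⟩ := heven (2 * j + 2) (by omega) (by omega) ⟨j + 1, by ring⟩
  rw [show 2 * j + 3 - 1 = 2 * j + 2 by omega] at hA₃ hA₂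
  rw [show 2 * j + 2 - 1 = 2 * j + 1 by omega] at hB₁ hB₂
  calc sB (2 * j + 1) ≤ sA (2 * j + 2) := hB₁
    _ ≤ sB (2 * j + 3) := hA₂
    _ < sA (2 * j + 3) := h
    _ ≤ sB (2 * j + 2) := hA₃
    _ ≤ sA (2 * j + 1) := hB₂

theorem sB_one_lt_sA_one
    (hodd : ∀ i, 1 ≤ i → i ≤ k - 1 → Odd i → sA i ≤ sB (i - 1) ∧ sA (i - 1) ≤ sB i)
    (heven : ∀ i, 1 ≤ i → i ≤ k - 1 → Even i → sB (i - 1) ≤ sA i ∧ sB i ≤ sA (i - 1))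
    (j : ℕ) (hj : 2 * j + 1 < k) (h : sB (2 * j + 1) < sA (2 * j + 1)) :
    sB 1 < sA 1 := by
  induction j with
  | zero => exact h
  | succ j ih =>
    exact ih (by omega) (sB_lt_sA_of_sB_lt_sA_add_two hodd heven (by omega) h)

theorem sA_zero_lt_sB_zero
    (hodd : ∀ i, 1 ≤ i → i ≤ k - 1 → Odd i → sA i ≤ sB (i - 1) ∧ sA (i - 1) ≤ sB i)
    (hk : 1 < k) (h : sB 1 < sA 1) :
    sA 0 < sB 0 := by
  obtain ⟨hA₁, hA₀⟩ := hodd 1 le_rfl (by omega) odd_one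
  calc sA 0 ≤ sB 1 := hA₀
    _ < sA 1 := h
    _ ≤ sB 0 := hA₁

end

theorem stmt_7_general (k : ℕ) (hk : 2 ≤ k) (hkeven : Even k)
    (sA sB : ℕ → ℕ)
    (hodd : ∀ i, 1 ≤ i → i ≤ k - 1 → Odd i → sA i ≤ sB (i - 1) ∧ sA (i - 1) ≤ sB i)
    (heven : ∀ i, 1 ≤ i → i ≤ k - 1 → Even i → sB (i - 1) ≤ sA i ∧ sB i ≤ sA (i - 1))
    (h : sB (k - 1) < sA (k - 1)) :
    sA 0 < sB 0 := by
  obtain ⟨t, rfl⟩ := hkeven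
  have hlast : t + t - 1 = 2 * (t - 1) + 1 := by omega
  rw [hlast] at h
  exact sA_zero_lt_sB_zero hodd (by omega)
    (sB_one_lt_sA_one hodd heven (t - 1) (by omega) h)

/-- Deterministic chain underlying the generalized Cabello–Liang–Li argument, even `k`:
`sA i` and `sB i` are the deterministic outcomes (in `{0,…,d−1}`) assigned to
input `i ∈ {0,…,k−1}` of Alice and Bob, respectively. -/
theorem stmt_7 (k d : ℕ) (hk : 2 ≤ k) (hkeven : Even k) (hd : 2 ≤ d)
    (sA sB : ℕ → ℕ)
    (hsA : ∀ i, i < k → sA i < d) (hsB : ∀ i, i < k → sB i < d)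
    (hodd : ∀ i, 1 ≤ i → i ≤ k - 1 → Odd i → sA i ≤ sB (i - 1) ∧ sA (i - 1) ≤ sB i)
    (heven : ∀ i, 1 ≤ i → i ≤ k - 1 → Even i → sB (i - 1) ≤ sA i ∧ sB i ≤ sA (i - 1))
    (h : sB (k - 1) < sA (k - 1)) :
    sA 0 < sB 0 :=
  stmt_7_general k hk hkeven sA sB hodd heven h
end

section
/- Let k ≥ 2, d ≥ 2, and let P be a behavior in the bipartite k-input d-output Bell scenario admitting a local-hidden-variable model. Suppose P(A_i > B_{i−1}) = 0 and P(A_{i−1} > B_i) = 0 for every odd i ∈ {1,…,k−1}, and P(A_i < B_{i−1}) = 0 and P(A_{i−1} < B_i) = 0 for every even i ∈ {1,…,k−1}. Define q := P(A_{k−1} < B_{k−1}) if k is odd and q := P(A_{k−1} > B_{k−1}) if k is even, and p := P(A_0 < B_0). Then q ≤ p. (Generalized Cabello–Liang–Li argument: the degree of success q − p is nonpositive for every LHV model.) -/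
/-!
In an LHV model every behavior probability is the total weight of the deterministic strategies
`λ` producing the event. A zero-probability constraint therefore holds pointwise on the support
of `w`. For a single deterministic strategy the constraints link neighbouring inputs, so the
event behind `q` at input `k - 1` propagates step by step down to the event `A_0 < B_0` behind
`p`. Hence the strategies contributing to `q` form a subset of those contributing to `p`.
-/

/-- `probLT d P x y` is `P(A_x < B_y)`, where `P a b x y` is the probability of
outcomes `(a, b)` given inputs `(x, y)` in a `k`-input `d`-output Bell scenario. -/
noncomputable def probLT (d : ℕ) (P : ℕ → ℕ → ℕ → ℕ → ℝ) (x y : ℕ) : ℝ :=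
  ∑ a ∈ Finset.range d, ∑ b ∈ Finset.range d, if a < b then P a b x y else 0

/-- `probGT d P x y` is `P(A_x > B_y)`. -/
noncomputable def probGT (d : ℕ) (P : ℕ → ℕ → ℕ → ℕ → ℝ) (x y : ℕ) : ℝ :=
  ∑ a ∈ Finset.range d, ∑ b ∈ Finset.range d, if b < a then P a b x y else 0

open Finset

section LHV

variable {Λ : Type*} [Fintype Λ]

lemma sum_range_ite_lhv_eq_sum_filter {d : ℕ} (w : Λ → ℝ) (u v : Λ → ℕ)
    (hu : ∀ l, u l < d) (hv : ∀ l, v l < d) (r : ℕ → ℕ → Prop) [DecidableRel r] :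
    ∑ a ∈ range d, ∑ b ∈ range d,
      (if r a b then ∑ l, w l * (if u l = a then (1 : ℝ) else 0) * (if v l = b then 1 else 0)
        else 0)
      = ∑ l with r (u l) (v l), w l := by
  have hpoint : ∀ a b,
      (if r a b then ∑ l, w l * (if u l = a then (1 : ℝ) else 0) * (if v l = b then 1 else 0)
        else 0)
      = ∑ l, if u l = a then if v l = b then (if r (u l) (v l) then w l else 0) else 0 else 0 := by
    intro a b
    by_cases hr : r a b <;> simp only [hr, if_true, if_false] <;> symm
    · exact sum_congr rfl fun l _ => by split_ifs <;> simp_all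
    · exact sum_eq_zero fun l _ => by split_ifs <;> simp_all
  simp_rw [hpoint]
  rw [sum_congr rfl fun a _ => sum_comm, sum_comm, sum_filter]
  simp [hu, hv]

variable {d : ℕ} {P : ℕ → ℕ → ℕ → ℕ → ℝ} {x y : ℕ} {w : Λ → ℝ} {f g : Λ → ℕ → ℕ}

lemma probLT_eq_sum_filter (hf : ∀ l, f l x < d) (hg : ∀ l, g l y < d)
    (hP : ∀ a b, P a b x y =
      ∑ l, w l * (if f l x = a then (1 : ℝ) else 0) * (if g l y = b then (1 : ℝ) else 0)) :
    probLT d P x y = ∑ l with f l x < g l y, w l := by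
  simp only [probLT, hP]
  exact sum_range_ite_lhv_eq_sum_filter w (f · x) (g · y) hf hg (· < ·)

lemma probGT_eq_sum_filter (hf : ∀ l, f l x < d) (hg : ∀ l, g l y < d)
    (hP : ∀ a b, P a b x y =
      ∑ l, w l * (if f l x = a then (1 : ℝ) else 0) * (if g l y = b then (1 : ℝ) else 0)) :
    probGT d P x y = ∑ l with g l y < f l x, w l := by
  simp only [probGT, hP]
  exact sum_range_ite_lhv_eq_sum_filter w (f · x) (g · y) hf hg (fun a b => b < a)

end LHV

lemma not_of_sum_filter_eq_zero {ι : Type*} [Fintype ι] {w : ι → ℝ} {c : ι → Prop}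
    [DecidablePred c] (hw : ∀ l, 0 ≤ w l) (h : ∑ l with c l, w l = 0) {l : ι} (hl : w l ≠ 0) :
    ¬ c l := fun hc =>
  hl <| (sum_eq_zero_iff_of_nonneg fun i _ => hw i).mp h l (mem_filter.mpr ⟨mem_univ l, hc⟩)

lemma sum_filter_le_sum_filter_of_imp {ι : Type*} [Fintype ι] {w : ι → ℝ} {p q : ι → Prop}
    [DecidablePred p] [DecidablePred q] (hw : ∀ l, 0 ≤ w l) (h : ∀ l, w l ≠ 0 → p l → q l) :
    ∑ l with p l, w l ≤ ∑ l with q l, w l := by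
  rw [sum_filter, sum_filter]
  refine sum_le_sum fun l _ => ?_
  split_ifs with hp hq hq
  · exact le_rfl
  · exact (not_not.mp fun hl => hq (h l hl hp)).le
  · exact hw l
  · exact le_rfl

lemma lt_of_alternating_chain {n : ℕ} {a b : ℕ → ℕ}
    (hodd : ∀ i, 1 ≤ i → i ≤ n → Odd i → a i ≤ b (i - 1) ∧ a (i - 1) ≤ b i)
    (heven : ∀ i, 1 ≤ i → i ≤ n → Even i → b (i - 1) ≤ a i ∧ b i ≤ a (i - 1)) :
    ∀ i ≤ n, (if Even i then a i < b i else b i < a i) → a 0 < b 0 := by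
  intro i
  induction i with
  | zero => simp
  | succ i ih =>
    intro hi hevent
    apply ih (by omega)
    rcases Nat.even_or_odd (i + 1) with he | ho
    · obtain ⟨h₁, h₂⟩ := heven (i + 1) (by omega) hi he
      have hi_odd : ¬ Even i := by simpa [Nat.even_add_one] using he
      simp only [he, hi_odd, if_true, if_false, Nat.add_sub_cancel] at hevent h₁ h₂ ⊢
      omega
    · obtain ⟨h₁, h₂⟩ := hodd (i + 1) (by omega) hi ho
      have he : ¬ Even (i + 1) := Nat.not_even_iff_odd.mpr ho
      have hi_even : Even i := by simpa [Nat.even_add_one] using he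
      simp only [he, hi_even, if_true, if_false, Nat.add_sub_cancel] at hevent h₁ h₂ ⊢
      omega

theorem stmt_8_general (k d : ℕ) (hk : 2 ≤ k)
    (P : ℕ → ℕ → ℕ → ℕ → ℝ)
    (Λ : Type) [Fintype Λ] (w : Λ → ℝ) (f g : Λ → ℕ → ℕ)
    (hw : ∀ l, 0 ≤ w l)
    (hf : ∀ l x, x < k → f l x < d) (hg : ∀ l y, y < k → g l y < d)
    (hP : ∀ a b x y, x < k → y < k → P a b x y =
      ∑ l, w l * (if f l x = a then (1 : ℝ) else 0) * (if g l y = b then (1 : ℝ) else 0))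
    (hodd : ∀ i, 1 ≤ i → i ≤ k - 1 → Odd i →
      probGT d P i (i - 1) = 0 ∧ probGT d P (i - 1) i = 0)
    (heven : ∀ i, 1 ≤ i → i ≤ k - 1 → Even i →
      probLT d P i (i - 1) = 0 ∧ probLT d P (i - 1) i = 0) :
    (if Odd k then probLT d P (k - 1) (k - 1) else probGT d P (k - 1) (k - 1))
      ≤ probLT d P 0 0 := by
  have hLT : ∀ x < k, ∀ y < k, probLT d P x y = ∑ l with f l x < g l y, w l :=
    fun x hx y hy => probLT_eq_sum_filter (hf · x hx) (hg · y hy) (hP · · x y hx hy)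
  have hGT : ∀ x < k, ∀ y < k, probGT d P x y = ∑ l with g l y < f l x, w l :=
    fun x hx y hy => probGT_eq_sum_filter (hf · x hx) (hg · y hy) (hP · · x y hx hy)
  have hchain : ∀ l, w l ≠ 0 →
      (if Even (k - 1) then f l (k - 1) < g l (k - 1) else g l (k - 1) < f l (k - 1)) →
      f l 0 < g l 0 := by
    intro l hl
    refine lt_of_alternating_chain (fun i hi₁ hik hi => ?_) (fun i hi₁ hik hi => ?_) _ le_rfl
    · obtain ⟨h₁, h₂⟩ := hodd i hi₁ hik hi
      rw [hGT _ (by omega) _ (by omega)] at h₁ h₂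
      exact ⟨not_lt.mp (not_of_sum_filter_eq_zero hw h₁ hl),
        not_lt.mp (not_of_sum_filter_eq_zero hw h₂ hl)⟩
    · obtain ⟨h₁, h₂⟩ := heven i hi₁ hik hi
      rw [hLT _ (by omega) _ (by omega)] at h₁ h₂
      exact ⟨not_lt.mp (not_of_sum_filter_eq_zero hw h₁ hl),
        not_lt.mp (not_of_sum_filter_eq_zero hw h₂ hl)⟩
  rw [hLT 0 (by omega) 0 (by omega)]
  by_cases hk_odd : Odd k
  · have he : Even (k - 1) := Nat.Odd.sub_odd hk_odd odd_one
    rw [if_pos hk_odd, hLT _ (by omega) _ (by omega)]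
    exact sum_filter_le_sum_filter_of_imp hw fun l hl hq => hchain l hl (by rwa [if_pos he])
  · have he : ¬ Even (k - 1) := by rw [Nat.even_sub (by omega)]; simpa using hk_odd
    rw [if_neg hk_odd, hGT _ (by omega) _ (by omega)]
    exact sum_filter_le_sum_filter_of_imp hw fun l hl hq => hchain l hl (by rwa [if_neg he])

/-- Generalized Cabello–Liang–Li argument: for any LHV behavior satisfying the
zero-probability constraints, the degree of success `q − p` is nonpositive. -/
theorem stmt_8 (k d : ℕ) (hk : 2 ≤ k) (hd : 2 ≤ d)
    (P : ℕ → ℕ → ℕ → ℕ → ℝ)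
    (hPpos : ∀ a b x y, a < d → b < d → x < k → y < k → 0 ≤ P a b x y)
    (hPnorm : ∀ x y, x < k → y < k →
      ∑ a ∈ Finset.range d, ∑ b ∈ Finset.range d, P a b x y = 1)
    (Λ : Type) [Fintype Λ] (w : Λ → ℝ) (f g : Λ → ℕ → ℕ)
    (hw : ∀ l, 0 ≤ w l) (hw1 : ∑ l, w l = 1)
    (hf : ∀ l x, x < k → f l x < d) (hg : ∀ l y, y < k → g l y < d)
    (hP : ∀ a b x y, x < k → y < k → P a b x y =
      ∑ l, w l * (if f l x = a then (1 : ℝ) else 0) * (if g l y = b then (1 : ℝ) else 0))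
    (hodd : ∀ i, 1 ≤ i → i ≤ k - 1 → Odd i →
      probGT d P i (i - 1) = 0 ∧ probGT d P (i - 1) i = 0)
    (heven : ∀ i, 1 ≤ i → i ≤ k - 1 → Even i →
      probLT d P i (i - 1) = 0 ∧ probLT d P (i - 1) i = 0) :
    (if Odd k then probLT d P (k - 1) (k - 1) else probGT d P (k - 1) (k - 1))
      ≤ probLT d P 0 0 :=
  stmt_8_general k d hk P Λ w f g hw hf hg hP hodd heven
end

section
/- Let k ≥ 3 be odd and d ≥ 2. Then there exist permutations π_A and π_B of the input set {0,…,k−1} such that for every behavior P in the bipartite k-input d-output Bell scenario, the relabeled behavior P′ defined by P′(a,b|x′,y′) := P(a,b|π_A(x′), π_B(y′)) satisfies: P fulfills the generalized Hardy conditions (P(A_i > B_{i−1}) = 0 and P(A_{i−1} > B_i) = 0 for all odd i ∈ {1,…,k−1}; P(A_i < B_{i−1}) = 0 and P(A_{i−1} < B_i) = 0 for all even i ∈ {1,…,k−1}; and P(A_0 < B_0) = 0) if and only if P′ fulfills the generalized FTI conditions (P′(A_i < B_{i−1}) = 0 and P′(B_{i−1} < A_{i−1}) = 0 for all i ∈ {1,…,k−1};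 and P′(A_0 < B_{k−1}) = 0); moreover P(A_{k−1} < B_{k−1}) = P′(A_{k−1} < B_{k−1}). (Theorem 1, odd-k case: the generalized ladder proof and the generalized FTI proof are equivalent up to relabeling of inputs.) -/
/-- The generalized Hardy (ladder-proof) zero-probability conditions. -/
def HardyConds (k d : ℕ) (P : ℕ → ℕ → ℕ → ℕ → ℝ) : Prop :=
  (∀ i, 1 ≤ i → i ≤ k - 1 → Odd i →
    probGT d P i (i - 1) = 0 ∧ probGT d P (i - 1) i = 0) ∧
  (∀ i, 1 ≤ i → i ≤ k - 1 → Even i →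
    probLT d P i (i - 1) = 0 ∧ probLT d P (i - 1) i = 0) ∧
  probLT d P 0 0 = 0

/-- The generalized FTI zero-probability conditions. -/
def FTIConds (k d : ℕ) (P : ℕ → ℕ → ℕ → ℕ → ℝ) : Prop :=
  (∀ i, 1 ≤ i → i ≤ k - 1 →
    probLT d P i (i - 1) = 0 ∧ probGT d P (i - 1) (i - 1) = 0) ∧
  probLT d P 0 (k - 1) = 0

/-!
Both sets of conditions are chains of vanishing probabilities along a path through the `2k`
inputs. The FTI path is `A_{k-1}, B_{k-2}, A_{k-2}, …, B_0, A_0, B_{k-1}`, the Hardy path is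
`A_{k-1}, B_{k-2}, A_{k-3}, …, A_0, B_0, A_1, B_2, …, A_{k-2}, B_{k-1}`, and the relabeling
sends the `n`-th vertex of the first to the `n`-th vertex of the second. Writing each family of
conditions as "`P(A_x < B_y)` vanishes on a set of pairs and `P(A_x > B_y)` on another", the
theorem reduces to computing the images of the FTI pair sets under the relabeling, which is
arithmetic modulo `2`.
-/

/-- Alice's relabeling `j ↦ k-2, k-4, …, 1, 0, 2, …, k-1`. -/
def permA (k j : ℕ) : ℕ := if 2 * j + 2 ≤ k then k - 2 - 2 * j else 2 * j + 1 - k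

/-- Bob's relabeling `j ↦ k-3, k-5, …, 0, 1, 3, …, k-2, k-1`. -/
def permB (k j : ℕ) : ℕ :=
  if j + 1 = k then k - 1 else if 2 * j + 2 ≤ k then k - 3 - 2 * j else 2 * j + 2 - k

def invA (k x : ℕ) : ℕ := if x % 2 = 1 then (k - 2 - x) / 2 else (x + k - 1) / 2

def invB (k y : ℕ) : ℕ :=
  if y + 1 = k then k - 1 else if y % 2 = 0 then (k - 3 - y) / 2 else (y + k - 2) / 2

section Relabeling

variable {k : ℕ}

theorem permA_lt {j : ℕ} (hj : j < k) : permA k j < k := by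
  unfold permA; split_ifs <;> omega

theorem permB_lt {j : ℕ} (hj : j < k) : permB k j < k := by
  unfold permB; split_ifs <;> omega

theorem invA_lt (hk : Odd k) {x : ℕ} (hx : x < k) : invA k x < k := by
  obtain ⟨m, rfl⟩ := hk; unfold invA; split_ifs <;> omega

theorem invB_lt (hk : Odd k) {y : ℕ} (hy : y < k) : invB k y < k := by
  obtain ⟨m, rfl⟩ := hk; unfold invB; split_ifs <;> omega

theorem permA_invA (hk : Odd k) {x : ℕ} (hx : x < k) : permA k (invA k x) = x := by
  obtain ⟨m, rfl⟩ := hk; unfold permA invA; split_ifs <;> omega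

theorem permB_invB (hk : Odd k) {y : ℕ} (hy : y < k) : permB k (invB k y) = y := by
  obtain ⟨m, rfl⟩ := hk; unfold permB invB; split_ifs <;> omega

theorem permA_bijOn (hk : Odd k) : Set.BijOn (permA k) (Set.Iio k) (Set.Iio k) :=
  (Set.finite_Iio k).surjOn_iff_bijOn_of_mapsTo (fun _ => permA_lt) |>.mp
    fun x hx => ⟨invA k x, invA_lt hk hx, permA_invA hk hx⟩

theorem permB_bijOn (hk : Odd k) : Set.BijOn (permB k) (Set.Iio k) (Set.Iio k) :=
  (Set.finite_Iio k).surjOn_iff_bijOn_of_mapsTo (fun _ => permB_lt) |>.mp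
    fun y hy => ⟨invB k y, invB_lt hk hy, permB_invB hk hy⟩

theorem permA_sub_one (hk : 0 < k) : permA k (k - 1) = k - 1 := by
  unfold permA; split_ifs <;> omega

theorem permB_sub_one (hk : 0 < k) : permB k (k - 1) = k - 1 := by
  unfold permB; split_ifs <;> omega

end Relabeling

def ZeroOn (d : ℕ) (P : ℕ → ℕ → ℕ → ℕ → ℝ) (lt gt : Set (ℕ × ℕ)) : Prop :=
  (∀ p ∈ lt, probLT d P p.1 p.2 = 0) ∧ ∀ p ∈ gt, probGT d P p.1 p.2 = 0

theorem zeroOn_relabel_iff (d : ℕ) (P : ℕ → ℕ → ℕ → ℕ → ℝ) (pA pB : ℕ → ℕ)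
    (lt gt : Set (ℕ × ℕ)) :
    ZeroOn d (fun a b x y => P a b (pA x) (pB y)) lt gt ↔
      ZeroOn d P (Prod.map pA pB '' lt) (Prod.map pA pB '' gt) := by
  simp only [ZeroOn, Set.forall_mem_image]
  rfl

def hardyLTPairs (k : ℕ) : Set (ℕ × ℕ) :=
  {(x, y) : ℕ × ℕ |
    x = 0 ∧ y = 0 ∨ x < k ∧ y < k ∧ (x = y + 1 ∧ Even x ∨ y = x + 1 ∧ Even y)}

def hardyGTPairs (k : ℕ) : Set (ℕ × ℕ) :=
  {(x, y) : ℕ × ℕ | x < k ∧ y < k ∧ (x = y + 1 ∧ Odd x ∨ y = x + 1 ∧ Odd y)}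

def ftiLTPairs (k : ℕ) : Set (ℕ × ℕ) :=
  {(x, y) : ℕ × ℕ | x = y + 1 ∧ x < k ∨ x = 0 ∧ y = k - 1}

def ftiGTPairs (k : ℕ) : Set (ℕ × ℕ) :=
  {(x, y) : ℕ × ℕ | x = y ∧ x + 1 < k}

theorem hardyConds_iff (k d : ℕ) (P : ℕ → ℕ → ℕ → ℕ → ℝ) :
    HardyConds k d P ↔ ZeroOn d P (hardyLTPairs k) (hardyGTPairs k) := by
  simp only [HardyConds, ZeroOn, hardyLTPairs, hardyGTPairs, Prod.forall, Set.mem_ofPred_eq]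
  constructor
  · rintro ⟨hodd, heven, h00⟩
    refine ⟨?_, ?_⟩
    · rintro x y (⟨rfl, rfl⟩ | ⟨hx, hy, ⟨rfl, he⟩ | ⟨rfl, he⟩⟩)
      · exact h00
      · simpa using (heven (y + 1) (by omega) (by omega) he).1
      · simpa using (heven (x + 1) (by omega) (by omega) he).2
    · rintro x y ⟨hx, hy, ⟨rfl, ho⟩ | ⟨rfl, ho⟩⟩
      · simpa using (hodd (y + 1) (by omega) (by omega) ho).1
      · simpa using (hodd (x + 1) (by omega) (by omega) ho).2
  · rintro ⟨hlt, hgt⟩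
    refine ⟨fun i hi hik ho => ⟨?_, ?_⟩, fun i hi hik he => ⟨?_, ?_⟩,
      hlt 0 0 (.inl ⟨rfl, rfl⟩)⟩
    · exact hgt i (i - 1) ⟨by omega, by omega, .inl ⟨by omega, ho⟩⟩
    · exact hgt (i - 1) i ⟨by omega, by omega, .inr ⟨by omega, ho⟩⟩
    · exact hlt i (i - 1) (.inr ⟨by omega, by omega, .inl ⟨by omega, he⟩⟩)
    · exact hlt (i - 1) i (.inr ⟨by omega, by omega, .inr ⟨by omega, he⟩⟩)

theorem ftiConds_iff (k d : ℕ) (P : ℕ → ℕ → ℕ → ℕ → ℝ) :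
    FTIConds k d P ↔ ZeroOn d P (ftiLTPairs k) (ftiGTPairs k) := by
  simp only [FTIConds, ZeroOn, ftiLTPairs, ftiGTPairs, Prod.forall, Set.mem_ofPred_eq]
  constructor
  · rintro ⟨hchain, hlast⟩
    refine ⟨?_, ?_⟩
    · rintro x y (⟨rfl, hx⟩ | ⟨rfl, rfl⟩)
      · simpa using (hchain (y + 1) (by omega) (by omega)).1
      · exact hlast
    · rintro x y ⟨rfl, hx⟩
      simpa using (hchain (x + 1) (by omega) (by omega)).2
  · rintro ⟨hlt, hgt⟩
    refine ⟨fun i hi hik => ⟨?_, ?_⟩, hlt 0 (k - 1) (.inr ⟨rfl, rfl⟩)⟩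
    · exact hlt i (i - 1) (.inl ⟨by omega, by omega⟩)
    · exact hgt (i - 1) (i - 1) ⟨rfl, by omega⟩

section Images

variable {k : ℕ}

theorem image_ftiLTPairs (hk : Odd k) :
    Prod.map (permA k) (permB k) '' ftiLTPairs k = hardyLTPairs k := by
  ext ⟨x, y⟩
  simp only [Set.mem_image, Prod.exists, Prod.map, Prod.mk.injEq, ftiLTPairs, hardyLTPairs,
    Set.mem_ofPred_eq, Nat.even_iff]
  constructor
  · rintro ⟨x, y, h, rfl, rfl⟩
    obtain ⟨m, rfl⟩ := hk
    unfold permA permB; split_ifs <;> omega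
  · intro h
    have hxy : x < k ∧ y < k := by obtain ⟨m, rfl⟩ := hk; omega
    refine ⟨invA k x, invB k y, ?_, permA_invA hk hxy.1, permB_invB hk hxy.2⟩
    obtain ⟨m, rfl⟩ := hk
    unfold invA invB; split_ifs <;> omega

theorem image_ftiGTPairs (hk : Odd k) :
    Prod.map (permA k) (permB k) '' ftiGTPairs k = hardyGTPairs k := by
  ext ⟨x, y⟩
  simp only [Set.mem_image, Prod.exists, Prod.map, Prod.mk.injEq, ftiGTPairs, hardyGTPairs,
    Set.mem_ofPred_eq, Nat.odd_iff]
  constructor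
  · rintro ⟨x, y, h, rfl, rfl⟩
    obtain ⟨m, rfl⟩ := hk
    unfold permA permB; split_ifs <;> omega
  · intro h
    refine ⟨invA k x, invB k y, ?_, permA_invA hk h.1, permB_invB hk h.2.1⟩
    obtain ⟨m, rfl⟩ := hk
    unfold invA invB; split_ifs <;> omega

end Images

theorem stmt_11_general (k d : ℕ) (hkodd : Odd k) :
    ∃ pA pB : ℕ → ℕ,
      Set.BijOn pA (Set.Iio k) (Set.Iio k) ∧ Set.BijOn pB (Set.Iio k) (Set.Iio k) ∧
      ∀ P : ℕ → ℕ → ℕ → ℕ → ℝ,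
        (∀ a b x y, a < d → b < d → x < k → y < k → 0 ≤ P a b x y) →
        (∀ x y, x < k → y < k →
          ∑ a ∈ Finset.range d, ∑ b ∈ Finset.range d, P a b x y = 1) →
        (HardyConds k d P ↔ FTIConds k d (fun a b x y => P a b (pA x) (pB y))) ∧
        probLT d P (k - 1) (k - 1)
          = probLT d (fun a b x y => P a b (pA x) (pB y)) (k - 1) (k - 1) := by
  refine ⟨permA k, permB k, permA_bijOn hkodd, permB_bijOn hkodd, fun P _ _ => ⟨?_, ?_⟩⟩
  · rw [hardyConds_iff, ftiConds_iff, zeroOn_relabel_iff d P (permA k) (permB k),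
      image_ftiLTPairs hkodd, image_ftiGTPairs hkodd]
  · change _ = probLT d P (permA k (k - 1)) (permB k (k - 1))
    rw [permA_sub_one hkodd.pos, permB_sub_one hkodd.pos]

/-- Theorem 1, odd-`k` case: there is a relabeling of inputs turning the
generalized Hardy conditions into the generalized FTI conditions, preserving
the success probability `P(A_{k−1} < B_{k−1})`. -/
theorem stmt_11 (k d : ℕ) (hk : 3 ≤ k) (hkodd : Odd k) (hd : 2 ≤ d) :
    ∃ pA pB : ℕ → ℕ,
      Set.BijOn pA (Set.Iio k) (Set.Iio k) ∧ Set.BijOn pB (Set.Iio k) (Set.Iio k) ∧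
      ∀ P : ℕ → ℕ → ℕ → ℕ → ℝ,
        (∀ a b x y, a < d → b < d → x < k → y < k → 0 ≤ P a b x y) →
        (∀ x y, x < k → y < k →
          ∑ a ∈ Finset.range d, ∑ b ∈ Finset.range d, P a b x y = 1) →
        (HardyConds k d P ↔ FTIConds k d (fun a b x y => P a b (pA x) (pB y))) ∧
        probLT d P (k - 1) (k - 1)
          = probLT d (fun a b x y => P a b (pA x) (pB y)) (k - 1) (k - 1) :=
  stmt_11_general k d hkodd
end

section
/- Let θ, α, β ∈ [0, π], let |ψ⟩ = sinθ(cosα|0⟩ − sinα|1⟩)|1⟩ + cosθ|1⟩|0⟩ ∈ ℂ²⊗ℂ², and let A₀ = σ_z, A₁ = cos(2α)σ_z − sin(2α)σ_x, B₀ = σ_z, B₁ = cos(2β)σ_z − sin(2β)σ_x. With the Born-rule probabilities P(a,b|x,y) = ⟨ψ| Π^{A_x}_a ⊗ Π^{B_y}_b |ψ⟩ where Π^O_a = (I + (−1)^a O)/2, the two zero-probability constraints of the FTI argument hold: P(0,0|0,0) = 0 and P(1,1|1,0) = 0. -/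
noncomputable section

/-- The Pauli matrix `σ_z`. -/
def pauliZ : Matrix (Fin 2) (Fin 2) ℂ := !![1, 0; 0, -1]

/-- The Pauli matrix `σ_x`. -/
def pauliX : Matrix (Fin 2) (Fin 2) ℂ := !![0, 1; 1, 0]

/-- The outcome-`a` projector `Π^O_a = (I + (−1)^a O)/2` of a ±1-valued observable `O`. -/
def outProj (O : Matrix (Fin 2) (Fin 2) ℂ) (a : Fin 2) : Matrix (Fin 2) (Fin 2) ℂ :=
  ((1 : ℂ) / 2) • (1 + ((-1 : ℂ) ^ (a : ℕ)) • O)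

/-- Alice's observables: `A 0 = σ_z`, `A 1 = cos(2α)σ_z − sin(2α)σ_x`. -/
def Aobs (α : ℝ) (x : Fin 2) : Matrix (Fin 2) (Fin 2) ℂ :=
  if x = 0 then pauliZ
  else (Real.cos (2 * α) : ℂ) • pauliZ - (Real.sin (2 * α) : ℂ) • pauliX

/-- Bob's observables: `B 0 = σ_z`, `B 1 = cos(2β)σ_z − sin(2β)σ_x`. -/
def Bobs (β : ℝ) (y : Fin 2) : Matrix (Fin 2) (Fin 2) ℂ :=
  if y = 0 then pauliZ
  else (Real.cos (2 * β) : ℂ) • pauliZ - (Real.sin (2 * β) : ℂ) • pauliX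

/-- Coefficients of `|ψ⟩ = sinθ(cosα|0⟩ − sinα|1⟩)|1⟩ + cosθ|1⟩|0⟩` in the basis `|ij⟩`:
`hardyState θ α i j` is the coefficient of `|i⟩|j⟩`. -/
def hardyState (θ α : ℝ) : Fin 2 → Fin 2 → ℂ :=
  fun i j =>
    if i = 0 then (if j = 0 then 0 else (Real.sin θ * Real.cos α : ℝ))
    else (if j = 0 then (Real.cos θ : ℝ) else (-(Real.sin θ * Real.sin α) : ℝ))

/-- `⟨ψ| M ⊗ N |ψ⟩` for a two-qubit vector with coefficients `ψ i j`. -/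
def born (ψ : Fin 2 → Fin 2 → ℂ) (M N : Matrix (Fin 2) (Fin 2) ℂ) : ℂ :=
  ∑ i, ∑ j, ∑ i', ∑ j', (starRingEnd ℂ) (ψ i j) * M i i' * N j j' * ψ i' j'

/-- The Born-rule behavior `P(a,b|x,y) = ⟨ψ| Π^{A_x}_a ⊗ Π^{B_y}_b |ψ⟩` for the Hardy
state and the observables above. -/
def bornProb (θ α β : ℝ) (a b x y : Fin 2) : ℂ :=
  born (hardyState θ α) (outProj (Aobs α x) a) (outProj (Bobs β y) b)

/-! Every projector involved is rank one, `Π = |u⟩⟨u|`, so each probability is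
`|⟨u ⊗ v|ψ⟩|²`. The state has no `|00⟩` component, and its `|·1⟩` component
`sinθ (cosα|0⟩ − sinα|1⟩)` is orthogonal to `(sinα, cosα)`, the `−1` eigenvector of `A₁`. -/

open Matrix

def amplitude (u v : Fin 2 → ℂ) (ψ : Fin 2 → Fin 2 → ℂ) : ℂ :=
  ∑ i, ∑ j, star (u i) * star (v j) * ψ i j

theorem born_vecMulVec (ψ : Fin 2 → Fin 2 → ℂ) (u v : Fin 2 → ℂ) :
    born ψ (vecMulVec u (star u)) (vecMulVec v (star v)) =
      star (amplitude u v ψ) * amplitude u v ψ := by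
  simp only [born, amplitude, vecMulVec_apply, Pi.star_apply, Fin.sum_univ_two, star_add, star_mul',
    RCLike.star_def, Complex.conj_conj]
  ring

theorem outProj_pauliZ_zero : outProj pauliZ 0 = vecMulVec ![1, 0] (star ![1, 0]) := by
  ext i j
  fin_cases i <;> fin_cases j <;> norm_num [outProj, pauliZ, vecMulVec_apply]

theorem outProj_pauliZ_one : outProj pauliZ 1 = vecMulVec ![0, 1] (star ![0, 1]) := by
  ext i j
  fin_cases i <;> fin_cases j <;> norm_num [outProj, pauliZ, vecMulVec_apply]

theorem outProj_rotated_one (α : ℝ) :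
    outProj ((Real.cos (2 * α) : ℂ) • pauliZ - (Real.sin (2 * α) : ℂ) • pauliX) 1 =
      vecMulVec ![(Real.sin α : ℂ), Real.cos α] (star ![(Real.sin α : ℂ), Real.cos α]) := by
  have hcos : (Real.cos (2 * α) : ℂ) = Real.cos α ^ 2 - Real.sin α ^ 2 := by
    exact_mod_cast Real.cos_two_mul' α
  have hsin : (Real.sin (2 * α) : ℂ) = 2 * Real.sin α * Real.cos α := by
    exact_mod_cast Real.sin_two_mul α
  have hone : (Real.cos α : ℂ) ^ 2 + Real.sin α ^ 2 = 1 := by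
    exact_mod_cast Real.cos_sq_add_sin_sq α
  rw [hcos, hsin]
  ext i j
  fin_cases i <;> fin_cases j <;>
    simp [outProj, pauliZ, pauliX, vecMulVec_apply, -Complex.ofReal_sin, -Complex.ofReal_cos] <;>
    grind

theorem amplitude_hardyState_zero_zero (θ α : ℝ) :
    amplitude ![1, 0] ![1, 0] (hardyState θ α) = 0 := by
  simp [amplitude, hardyState, Fin.sum_univ_two]

theorem amplitude_hardyState_rotated_one (θ α : ℝ) :
    amplitude ![(Real.sin α : ℂ), Real.cos α] ![0, 1] (hardyState θ α) = 0 := by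
  simp [amplitude, hardyState, Fin.sum_univ_two, -Complex.ofReal_sin, -Complex.ofReal_cos]
  ring

theorem stmt_13_general (θ α β : ℝ) :
    bornProb θ α β 0 0 0 0 = 0 ∧ bornProb θ α β 1 1 1 0 = 0 := by
  constructor
  · rw [bornProb, Aobs, Bobs, if_pos rfl, if_pos rfl, outProj_pauliZ_zero, born_vecMulVec,
      amplitude_hardyState_zero_zero, mul_zero]
  · rw [bornProb, Aobs, Bobs, if_neg one_ne_zero, if_pos rfl, outProj_rotated_one,
      outProj_pauliZ_one, born_vecMulVec, amplitude_hardyState_rotated_one, mul_zero]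

/-- The two zero-probability constraints of the FTI argument hold for the Hardy state
and observables: `P(0,0|0,0) = 0` and `P(1,1|1,0) = 0`. -/
theorem stmt_13 (θ α β : ℝ) (hθ : θ ∈ Set.Icc 0 Real.pi) (hα : α ∈ Set.Icc 0 Real.pi)
    (hβ : β ∈ Set.Icc 0 Real.pi) :
    bornProb θ α β 0 0 0 0 = 0 ∧ bornProb θ α β 1 1 1 0 = 0 :=
  stmt_13_general θ α β

end
end

section
/- Let θ, α, β ∈ [0, π], let |ψ⟩ = sinθ(cosα|0⟩ − sinα|1⟩)|1⟩ + cosθ|1⟩|0⟩ ∈ ℂ²⊗ℂ², and let A₀ = σ_z, A₁ = cos(2α)σ_z − sin(2α)σ_x, B₀ = σ_z, B₁ = cos(2β)σ_z − sin(2β)σ_x. With the Born-rule probabilities P(a,b|x,y) = ⟨ψ| Π^{A_x}_a ⊗ Π^{B_y}_b |ψ⟩ where Π^O_a = (I + (−1)^a O)/2, the degree of success of the FTI argument satisfies P(1,1|1,1) − P(1,1|0,1) = (1/2)·sinα·[(cos2β·cos2θ − 1)·sinα + sin2β·sin2θ]. -/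
/-!
Only Alice's setting changes between the two probabilities, so their difference is
`⟨ψ| (Π^{A_1}_1 − Π^{A_0}_1) ⊗ Π^{B_1}_1 |ψ⟩`, where
`Π^{A_1}_1 − Π^{A_0}_1 = (A_0 − A_1)/2 = sin α · R` with `R = [[sin α, cos α], [cos α, −sin α]]`,
and `Π^{B_1}_1` is the projector onto `b = (sin β, cos β)`. Contracting `ψ` with `⟨b|` leaves
Alice with `φ = sin θ cos β (cos α, −sin α) + cos θ sin β (0, 1)`, and since
`R (cos α, −sin α) = (0, 1)`, the difference is `sin α · ⟨φ|R|φ⟩` with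
`⟨φ|R|φ⟩ = 2 sin θ cos θ sin β cos β − sin α (sin²θ cos²β + cos²θ sin²β)`.
-/

noncomputable section

open Matrix

lemma born_sub_left (ψ : Fin 2 → Fin 2 → ℂ) (M M' N : Matrix (Fin 2) (Fin 2) ℂ) :
    born ψ (M - M') N = born ψ M N - born ψ M' N := by
  simp only [born, Matrix.sub_apply, mul_sub, sub_mul, Finset.sum_sub_distrib]

lemma born_smul_left (ψ : Fin 2 → Fin 2 → ℂ) (c : ℂ) (M N : Matrix (Fin 2) (Fin 2) ℂ) :
    born ψ (c • M) N = c * born ψ M N := by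
  simp only [born, Matrix.smul_apply, smul_eq_mul, Finset.mul_sum, mul_assoc, mul_left_comm _ c]

lemma born_vecMulVec_right (ψ : Fin 2 → Fin 2 → ℂ) (M : Matrix (Fin 2) (Fin 2) ℂ)
    (u : Fin 2 → ℂ) :
    born ψ M (vecMulVec u (star u)) =
      star (fun i => ∑ j, star (u j) * ψ i j) ⬝ᵥ
        (M *ᵥ fun i => ∑ j, star (u j) * ψ i j) := by
  simp only [born, vecMulVec_apply, dotProduct, mulVec, Pi.star_apply, Fin.sum_univ_two,
    star_add, star_mul, Complex.star_def, Complex.conj_conj]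
  ring

lemma outProj_one_sub_outProj_one (O O' : Matrix (Fin 2) (Fin 2) ℂ) :
    outProj O 1 - outProj O' 1 = (1 / 2 : ℂ) • (O' - O) := by
  simp only [outProj, Fin.val_one, pow_one, neg_one_smul]
  module

lemma Aobs_zero_sub_Aobs_one (α : ℝ) :
    Aobs α 0 - Aobs α 1 =
      ((2 * Real.sin α : ℝ) : ℂ) •
        !![(Real.sin α : ℂ), Real.cos α; Real.cos α, -Real.sin α] := by
  ext i j
  fin_cases i <;> fin_cases j <;>
    simp [Aobs, pauliZ, pauliX, Real.cos_two_mul, Real.sin_two_mul, Real.cos_sq'] <;>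
    ring

lemma outProj_Bobs_one_one_eq_vecMulVec (β : ℝ) :
    outProj (Bobs β 1) 1 =
      vecMulVec ![(Real.sin β : ℂ), Real.cos β] (star ![(Real.sin β : ℂ), Real.cos β]) := by
  ext i j
  fin_cases i <;> fin_cases j <;>
    simp [outProj, Bobs, pauliZ, pauliX, Complex.cos_two_mul, Complex.sin_two_mul,
      Complex.cos_sq', ← Complex.sin_conj, ← Complex.cos_conj, Complex.conj_ofReal]
  · ring
  · ring
  · ring
  · rw [← sq, Complex.cos_sq']

lemma hardyState_contract_right (θ α β : ℝ) :
    (fun i => ∑ j, star (![(Real.sin β : ℂ), Real.cos β] j) * hardyState θ α i j) =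
      ![((Real.sin θ * Real.cos β * Real.cos α : ℝ) : ℂ),
        ((Real.cos θ * Real.sin β - Real.sin θ * Real.cos β * Real.sin α : ℝ) : ℂ)] := by
  ext i
  fin_cases i <;>
    simp [hardyState, Fin.sum_univ_two, ← Complex.sin_conj, ← Complex.cos_conj,
      Complex.conj_ofReal] <;>
    ring

theorem stmt_14_general (θ α β : ℝ) :
    bornProb θ α β 1 1 1 1 - bornProb θ α β 1 1 0 1 =
      ((1 / 2 * Real.sin α *
        ((Real.cos (2 * β) * Real.cos (2 * θ) - 1) * Real.sin α +
          Real.sin (2 * β) * Real.sin (2 * θ)) : ℝ) : ℂ) := by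
  rw [bornProb, bornProb, ← born_sub_left, outProj_one_sub_outProj_one, Aobs_zero_sub_Aobs_one,
    smul_smul, born_smul_left, outProj_Bobs_one_one_eq_vecMulVec, born_vecMulVec_right,
    hardyState_contract_right]
  simp [dotProduct, mulVec, Fin.sum_univ_two, ← Complex.sin_conj, ← Complex.cos_conj,
    Complex.conj_ofReal, Complex.cos_two_mul, Complex.sin_two_mul]
  linear_combination
    Complex.sin α * (2 * Complex.sin θ * Complex.cos θ * Complex.sin β * Complex.cos β -
        Complex.sin α * Complex.sin θ ^ 2 * Complex.cos β ^ 2) *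
        Complex.sin_sq_add_cos_sq (α : ℂ) -
      Complex.sin α ^ 2 * Complex.cos β ^ 2 * Complex.sin_sq_add_cos_sq (θ : ℂ) -
      Complex.sin α ^ 2 * Complex.cos θ ^ 2 * Complex.sin_sq_add_cos_sq (β : ℂ)

/-- Degree of success of the FTI argument for the Hardy state and observables:
`P(1,1|1,1) − P(1,1|0,1) = (1/2)·sinα·[(cos2β·cos2θ − 1)·sinα + sin2β·sin2θ]`. -/
theorem stmt_14 (θ α β : ℝ) (hθ : θ ∈ Set.Icc 0 Real.pi) (hα : α ∈ Set.Icc 0 Real.pi)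
    (hβ : β ∈ Set.Icc 0 Real.pi) :
    bornProb θ α β 1 1 1 1 - bornProb θ α β 1 1 0 1 =
      ((1 / 2 * Real.sin α *
        ((Real.cos (2 * β) * Real.cos (2 * θ) - 1) * Real.sin α +
          Real.sin (2 * β) * Real.sin (2 * θ)) : ℝ) : ℂ) :=
  stmt_14_general θ α β

end
end

section
/- Let θ, α, β ∈ (0, π/2) satisfy tanθ·sinα = tanβ, let |ψ⟩ = sinθ(cosα|0⟩ − sinα|1⟩)|1⟩ + cosθ|1⟩|0⟩ ∈ ℂ²⊗ℂ², and let A₀ = σ_z, A₁ = cos(2α)σ_z − sin(2α)σ_x, B₀ = σ_z, B₁ = cos(2β)σ_z − sin(2β)σ_x, with Born-rule probabilities P(a,b|x,y) = ⟨ψ| Π^{A_x}_a ⊗ Π^{B_y}_b |ψ⟩ where Π^O_a = (I + (−1)^a O)/2. Then all three zero-probability constraints of Hardy's paradox hold, P(0,0|0,0) = 0, P(1,1|0,1) = 0, P(1,1|1,0) = 0, and the success probability equals P(1,1|1,1) = (cosθ·cosα·sinβ)². -/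
noncomputable section

/-!
All observables are of the form `cos(2φ)σ_z − sin(2φ)σ_x` (with `φ = 0` for `σ_z`), whose outcome
projectors are rank one onto the real vectors `(cos φ, −sin φ)` and `(sin φ, cos φ)`. Since `ψ` is
real, every probability is then the square of a real amplitude `⟨u ⊗ v|ψ⟩`, an explicit
trigonometric polynomial. Three of them vanish identically or by `sin θ sin α cos β = cos θ sin β`,
which is the Hardy constraint `tan θ sin α = tan β` with denominators cleared; the fourth collapses
to `cos θ cos α sin β`.
-/

open Real Matrix

def spinObs (φ : ℝ) : Matrix (Fin 2) (Fin 2) ℂ :=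
  (Real.cos (2 * φ) : ℂ) • pauliZ - (Real.sin (2 * φ) : ℂ) • pauliX

def spinEigvec (φ : ℝ) (a : Fin 2) : Fin 2 → ℝ :=
  if a = 0 then ![cos φ, -sin φ] else ![sin φ, cos φ]

def rankOneProj (u : Fin 2 → ℝ) : Matrix (Fin 2) (Fin 2) ℂ :=
  vecMulVec (fun i => (u i : ℂ)) (fun i => (u i : ℂ))

lemma outProj_spinObs (φ : ℝ) (a : Fin 2) :
    outProj (spinObs φ) a = rankOneProj (spinEigvec φ a) := by
  have hcc : cos φ * cos φ = (1 + cos (2 * φ)) / 2 := by rw [← sq, cos_sq]; ring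
  have hss : sin φ * sin φ = (1 - cos (2 * φ)) / 2 := by rw [← sq, sin_sq_eq_half_sub]; ring
  have hsc : sin φ * cos φ = sin (2 * φ) / 2 := by rw [sin_two_mul]; ring
  have hcs : cos φ * sin φ = sin (2 * φ) / 2 := by rw [mul_comm, hsc]
  ext i j
  fin_cases a <;> fin_cases i <;> fin_cases j <;>
    simp [outProj, spinObs, spinEigvec, rankOneProj, pauliZ, pauliX, vecMulVec_apply,
      ← Complex.ofReal_mul, hcc, hss, hsc, hcs, -Complex.ofReal_cos, -Complex.ofReal_sin] <;> ring

def productAmplitude (ψ : Fin 2 → Fin 2 → ℝ) (u v : Fin 2 → ℝ) : ℝ :=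
  ∑ i, ∑ j, u i * v j * ψ i j

lemma born_rankOneProj (ψ : Fin 2 → Fin 2 → ℝ) (u v : Fin 2 → ℝ) :
    born (fun i j => (ψ i j : ℂ)) (rankOneProj u) (rankOneProj v) =
      ((productAmplitude ψ u v ^ 2 : ℝ) : ℂ) := by
  simp only [born, rankOneProj, productAmplitude, vecMulVec_apply, Complex.conj_ofReal,
    Fin.sum_univ_two]
  push_cast
  ring

def hardyCoeff (θ α : ℝ) : Fin 2 → Fin 2 → ℝ :=
  ![![0, sin θ * cos α], ![cos θ, -(sin θ * sin α)]]

lemma hardyState_eq (θ α : ℝ) : hardyState θ α = fun i j => (hardyCoeff θ α i j : ℂ) := by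
  ext i j
  fin_cases i <;> fin_cases j <;> simp [hardyState, hardyCoeff]

lemma Aobs_eq_spinObs (α : ℝ) (x : Fin 2) : Aobs α x = spinObs (x * α) := by
  fin_cases x <;> simp [Aobs, spinObs]

lemma Bobs_eq_spinObs (β : ℝ) (y : Fin 2) : Bobs β y = spinObs (y * β) := by
  fin_cases y <;> simp [Bobs, spinObs]

lemma bornProb_eq_sq (θ α β : ℝ) (a b x y : Fin 2) :
    bornProb θ α β a b x y = ((productAmplitude (hardyCoeff θ α) (spinEigvec (x * α) a)
      (spinEigvec (y * β) b) ^ 2 : ℝ) : ℂ) := by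
  rw [bornProb, hardyState_eq, Aobs_eq_spinObs, Bobs_eq_spinObs, outProj_spinObs,
    outProj_spinObs, born_rankOneProj]

lemma sin_mul_sin_mul_cos_eq_of_tan_mul_sin_eq_tan {θ α β : ℝ} (hθ : cos θ ≠ 0)
    (hβ : cos β ≠ 0) (h : tan θ * sin α = tan β) :
    sin θ * sin α * cos β = cos θ * sin β := by
  rw [tan_eq_sin_div_cos, tan_eq_sin_div_cos] at h
  field_simp at h
  linear_combination h

theorem stmt_17_general (θ α β : ℝ) (hθ : θ ∈ Set.Ioo 0 (Real.pi / 2))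
    (hβ : β ∈ Set.Ioo 0 (Real.pi / 2))
    (hcon : Real.tan θ * Real.sin α = Real.tan β) :
    bornProb θ α β 0 0 0 0 = 0 ∧ bornProb θ α β 1 1 0 1 = 0 ∧
    bornProb θ α β 1 1 1 0 = 0 ∧
    bornProb θ α β 1 1 1 1 = (((Real.cos θ * Real.cos α * Real.sin β) ^ 2 : ℝ) : ℂ) := by
  have hcon' := sin_mul_sin_mul_cos_eq_of_tan_mul_sin_eq_tan
    (cos_pos_of_mem_Ioo ⟨by linarith [hθ.1, pi_pos], hθ.2⟩).ne'
    (cos_pos_of_mem_Ioo ⟨by linarith [hβ.1, pi_pos], hβ.2⟩).ne' hcon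
  simp only [bornProb_eq_sq, Complex.ofReal_eq_zero, Complex.ofReal_inj,
    pow_eq_zero_iff two_ne_zero, productAmplitude, hardyCoeff, spinEigvec, Fin.sum_univ_two,
    Fin.isValue, ↓reduceIte, Fin.val_zero, Fin.val_one, Nat.cast_zero, Nat.cast_one, zero_mul,
    one_mul, cos_zero, sin_zero, cons_val_zero, cons_val_one, one_ne_zero]
  exact ⟨by ring, by linear_combination -hcon', by ring, by ring⟩

/-- Under the Hardy constraint `tanθ·sinα = tanβ`, all three zero-probability
constraints of Hardy's paradox hold and the success probability equals
`(cosθ·cosα·sinβ)²`. -/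
theorem stmt_17 (θ α β : ℝ) (hθ : θ ∈ Set.Ioo 0 (Real.pi / 2))
    (hα : α ∈ Set.Ioo 0 (Real.pi / 2)) (hβ : β ∈ Set.Ioo 0 (Real.pi / 2))
    (hcon : Real.tan θ * Real.sin α = Real.tan β) :
    bornProb θ α β 0 0 0 0 = 0 ∧ bornProb θ α β 1 1 0 1 = 0 ∧
    bornProb θ α β 1 1 1 0 = 0 ∧
    bornProb θ α β 1 1 1 1 = (((Real.cos θ * Real.cos α * Real.sin β) ^ 2 : ℝ) : ℂ) :=
  stmt_17_general θ α β hθ hβ hcon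

end
end

section
/- Let C ∈ (0,1). Then the supremum of (cosθ·cosα·sinβ)² over all θ, α, β ∈ (0, π/2) satisfying the Hardy constraint tanθ·sinα = tanβ and the fixed-concurrence constraint sin2θ·cosα = C equals C²·(1−C)/(2−C)², and this supremum is attained (in particular at a point where cos²β = C/(2−C)). (Maximal success probability of Hardy's paradox for two-qubit pure states of given concurrence C.) -/
/-!
Write `a, b, c, s` for `cos θ, sin θ, cos α, sin α`, so that the concurrence is `C = 2abc`.
The Hardy constraint gives `sin²β = b²s² / (a² + b²s²)`, hence the success probability is
`(C/2)² · s² / (a² + b²s²)`. On the circles `a² + b² = c² + s² = 1` one has the identity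
`(1 - 2abc)(a² + b²s²) = s²(1 - abc)² + (ac(a - bc))²`, which bounds `s² / (a² + b²s²)` by
`(1 - C) / (1 - C/2)²`, with equality iff `a = bc`. Then `C = 2a²`, and `tan θ = 1/c` turns the
Hardy constraint into `tan β = tan α`, so the optimum is `cos θ = √(C/2)`, `cos α = cos β = √(C/(2-C))`.
-/

open Real Set

theorem sq_mul_one_sub_mul_sq_le {a b c s : ℝ} (hab : a ^ 2 + b ^ 2 = 1) (hcs : c ^ 2 + s ^ 2 = 1) :
    s ^ 2 * (1 - a * b * c) ^ 2 ≤ (1 - 2 * a * b * c) * (a ^ 2 + b ^ 2 * s ^ 2) := by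
  have key : (1 - 2 * a * b * c) * (a ^ 2 + b ^ 2 * s ^ 2)
      = s ^ 2 * (1 - a * b * c) ^ 2 + (a * c * (a - b * c)) ^ 2 := by
    linear_combination (s ^ 2 - a ^ 2 * c ^ 2 - 2 * a * b * c * s ^ 2) * hab
      + (2 * a ^ 3 * b * c - a ^ 2 * b ^ 2 * c ^ 2 - a ^ 2) * hcs
  rw [key]
  exact le_add_of_nonneg_right (sq_nonneg _)

theorem sin_sq_mul_eq_of_tan_mul_sin_eq_tan {θ α β : ℝ} (hθ : cos θ ≠ 0) (hβ : cos β ≠ 0)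
    (h : tan θ * sin α = tan β) :
    sin β ^ 2 * (cos θ ^ 2 + sin θ ^ 2 * sin α ^ 2) = sin θ ^ 2 * sin α ^ 2 := by
  rw [tan_eq_sin_div_cos, tan_eq_sin_div_cos, div_mul_eq_mul_div, div_eq_div_iff hθ hβ] at h
  linear_combination (-(sin θ * sin α * cos β + cos θ * sin β)) * h
    + sin θ ^ 2 * sin α ^ 2 * cos_sq_add_sin_sq β

theorem sin_two_mul_mul_cos_le_one (θ α : ℝ) : sin (2 * θ) * cos α ≤ 1 :=
  (le_abs_self _).trans <| by
    rw [abs_mul]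
    exact mul_le_one₀ (abs_sin_le_one _) (abs_nonneg _) (abs_cos_le_one _)

theorem sq_cos_mul_cos_mul_sin_le {θ α β C : ℝ} (hθ : cos θ ≠ 0) (hβ : cos β ≠ 0)
    (htan : tan θ * sin α = tan β) (hC : sin (2 * θ) * cos α = C) :
    (cos θ * cos α * sin β) ^ 2 ≤ C ^ 2 * (1 - C) / (2 - C) ^ 2 := by
  have h2C : 0 < 2 - C := by linarith [hC ▸ sin_two_mul_mul_cos_le_one θ α]
  have hsinβ := sin_sq_mul_eq_of_tan_mul_sin_eq_tan hθ hβ htan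
  have key := sq_mul_one_sub_mul_sq_le (cos_sq_add_sin_sq θ) (cos_sq_add_sin_sq α)
  rw [sin_two_mul] at hC
  set a := cos θ
  set b := sin θ
  set c := cos α
  set s := sin α
  have hD : 0 < a ^ 2 + b ^ 2 * s ^ 2 := by positivity
  rw [le_div_iff₀ (by positivity), ← mul_le_mul_iff_of_pos_right hD]
  calc (a * c * sin β) ^ 2 * (2 - C) ^ 2 * (a ^ 2 + b ^ 2 * s ^ 2)
      = 4 * a ^ 2 * b ^ 2 * c ^ 2 * (s ^ 2 * (1 - a * b * c) ^ 2) := by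
        rw [← hC]; linear_combination (a * c * (2 - 2 * b * a * c)) ^ 2 * hsinβ
    _ ≤ 4 * a ^ 2 * b ^ 2 * c ^ 2 * ((1 - 2 * a * b * c) * (a ^ 2 + b ^ 2 * s ^ 2)) :=
        mul_le_mul_of_nonneg_left key (by positivity)
    _ = C ^ 2 * (1 - C) * (a ^ 2 + b ^ 2 * s ^ 2) := by rw [← hC]; ring

theorem arccos_mem_Ioo_zero_pi_div_two {x : ℝ} (hx : x ∈ Ioo 0 1) : arccos x ∈ Ioo 0 (π / 2) :=
  ⟨arccos_pos.mpr hx.2, arccos_lt_pi_div_two.mpr hx.1⟩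

theorem tan_arccos_mul_sin_arccos_eq_tan_arccos {x y : ℝ} (hx : x ∈ Ioo 0 1)
    (hy : y ∈ Ioo 0 1) (hxy : √(1 - x ^ 2) * y = x) :
    tan (arccos x) * sin (arccos y) = tan (arccos y) := by
  rw [tan_arccos, tan_arccos, sin_arccos, div_mul_eq_mul_div, div_eq_div_iff hx.1.ne' hy.1.ne']
  linear_combination √(1 - y ^ 2) * hxy

theorem sin_two_mul_arccos_mul_cos_arccos {x y : ℝ} (hx : x ∈ Ioo 0 1) (hy : y ∈ Ioo 0 1)
    (hxy : √(1 - x ^ 2) * y = x) :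
    sin (2 * arccos x) * cos (arccos y) = 2 * x ^ 2 := by
  rw [sin_two_mul, sin_arccos, cos_arccos (by linarith [hx.1]) hx.2.le,
    cos_arccos (by linarith [hy.1]) hy.2.le]
  linear_combination 2 * x * hxy

theorem exists_hardy_optimum {C : ℝ} (hC : C ∈ Ioo 0 1) :
    ∃ θ α β : ℝ, θ ∈ Ioo 0 (π / 2) ∧ α ∈ Ioo 0 (π / 2) ∧ β ∈ Ioo 0 (π / 2) ∧
      tan θ * sin α = tan β ∧ sin (2 * θ) * cos α = C ∧ cos β ^ 2 = C / (2 - C) ∧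
      (cos θ * cos α * sin β) ^ 2 = C ^ 2 * (1 - C) / (2 - C) ^ 2 := by
  obtain ⟨hC0, hC1⟩ := hC
  have h2C : 0 < 2 - C := by linarith
  set x := √(C / 2)
  set y := √(C / (2 - C))
  have hx2 : x ^ 2 = C / 2 := sq_sqrt (by positivity)
  have hy2 : y ^ 2 = C / (2 - C) := sq_sqrt (by positivity)
  have hx : x ∈ Ioo 0 1 := ⟨by positivity, by nlinarith [sqrt_nonneg (C / 2)]⟩
  have hy : y ∈ Ioo 0 1 := by
    have : C / (2 - C) < 1 := (div_lt_one h2C).mpr (by linarith)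
    exact ⟨by positivity, by nlinarith [sqrt_nonneg (C / (2 - C))]⟩
  have hxy : √(1 - x ^ 2) * y = x := by
    rw [← sqrt_mul (by nlinarith), hx2]
    congr 1
    field_simp
  have hcy : cos (arccos y) = y := cos_arccos (by linarith [hy.1]) hy.2.le
  refine ⟨arccos x, arccos y, arccos y, arccos_mem_Ioo_zero_pi_div_two hx,
    arccos_mem_Ioo_zero_pi_div_two hy, arccos_mem_Ioo_zero_pi_div_two hy,
    tan_arccos_mul_sin_arccos_eq_tan_arccos hx hy hxy, ?_, by rw [hcy, hy2], ?_⟩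
  · rw [sin_two_mul_arccos_mul_cos_arccos hx hy hxy, hx2]
    ring
  · rw [cos_arccos (by linarith [hx.1]) hx.2.le, hcy, sin_arccos, mul_pow, mul_pow, hx2,
      sq_sqrt (by nlinarith [hy.1, hy.2] : 0 ≤ 1 - y ^ 2), hy2]
    field_simp
    ring

/-- Maximal success probability of Hardy's paradox for two-qubit pure states of given
concurrence `C`: the supremum of `(cosθ·cosα·sinβ)²` over `θ, α, β ∈ (0, π/2)` subject
to the Hardy constraint `tanθ·sinα = tanβ` and fixed concurrence `sin2θ·cosα = C`
equals `C²·(1−C)/(2−C)²`, attained in particular at a point where `cos²β = C/(2−C)`. -/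
theorem stmt_18 (C : ℝ) (hC : C ∈ Set.Ioo 0 1) :
    IsGreatest
      {p : ℝ | ∃ θ α β : ℝ, θ ∈ Set.Ioo 0 (π / 2) ∧ α ∈ Set.Ioo 0 (π / 2) ∧
        β ∈ Set.Ioo 0 (π / 2) ∧ Real.tan θ * Real.sin α = Real.tan β ∧
        Real.sin (2 * θ) * Real.cos α = C ∧
        p = (Real.cos θ * Real.cos α * Real.sin β) ^ 2}
      (C ^ 2 * (1 - C) / (2 - C) ^ 2) ∧
    ∃ θ α β : ℝ, θ ∈ Set.Ioo 0 (π / 2) ∧ α ∈ Set.Ioo 0 (π / 2) ∧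
      β ∈ Set.Ioo 0 (π / 2) ∧ Real.tan θ * Real.sin α = Real.tan β ∧
      Real.sin (2 * θ) * Real.cos α = C ∧
      Real.cos β ^ 2 = C / (2 - C) ∧
      (Real.cos θ * Real.cos α * Real.sin β) ^ 2 = C ^ 2 * (1 - C) / (2 - C) ^ 2 := by
  refine ⟨⟨?_, ?_⟩, exists_hardy_optimum hC⟩
  · obtain ⟨θ, α, β, hθ, hα, hβ, htan, hconc, -, hprob⟩ := exists_hardy_optimum hC
    exact ⟨θ, α, β, hθ, hα, hβ, htan, hconc, hprob.symm⟩
  rintro p ⟨θ, α, β, hθ, -, hβ, htan, hconc, rfl⟩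
  have cos_ne_zero {φ : ℝ} (hφ : φ ∈ Ioo 0 (π / 2)) : cos φ ≠ 0 :=
    (cos_pos_of_mem_Ioo ⟨by linarith [hφ.1, pi_pos], hφ.2⟩).ne'
  exact sq_cos_mul_cos_mul_sin_le (cos_ne_zero hθ) (cos_ne_zero hβ) htan hconc
end

section
/- For every C ∈ (0,1), the inequality C²·(1−C)/(2−C)² < (√(1−C²)/2)·(1 − √(1−C²)) holds. (For every value of the concurrence, the maximal degree of success of the FTI-based Hardy-type argument strictly exceeds the maximal success probability of Hardy's original argument.) -/
/-!
Write `s = √(1 - C²)`, so that `C² = (1 - s)(1 + s)`. Cancelling the common factor `1 - s`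
reduces the claim to `2(1 - C) < s(C² - 2C + 2)`. Squaring turns this into
`4(1 - C)² < (1 - C²)(C² - 2C + 2)²`, and the difference of the two sides factors as
`C³(1 - C)(C² - 3C + 4)`, which is positive on `(0, 1)`.
-/

lemma two_mul_one_sub_lt_sqrt_one_sub_sq_mul {C : ℝ} (h0 : 0 < C) (h1 : C < 1) :
    2 * (1 - C) < √(1 - C ^ 2) * (C ^ 2 - 2 * C + 2) := by
  have hq : 0 < C ^ 2 - 2 * C + 2 := by nlinarith
  rw [← Real.sqrt_sq hq.le, ← Real.sqrt_mul (by nlinarith), Real.lt_sqrt (by linarith)]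
  have hdiff : 0 < C ^ 3 * (1 - C) * (C ^ 2 - 3 * C + 4) :=
    mul_pos (mul_pos (pow_pos h0 3) (by linarith)) (by nlinarith)
  linear_combination hdiff

lemma sq_mul_one_sub_div_lt_of_sq_add_sq {C s : ℝ} (hC : C < 1) (hs1 : s < 1)
    (hCs : C ^ 2 + s ^ 2 = 1) (hkey : 2 * (1 - C) < s * (C ^ 2 - 2 * C + 2)) :
    C ^ 2 * (1 - C) / (2 - C) ^ 2 < s / 2 * (1 - s) := by
  rw [div_lt_iff₀ (by nlinarith)]
  have hscaled := mul_lt_mul_of_pos_left hkey (by linarith : (0 : ℝ) < (1 - s) / 2)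
  linear_combination hscaled + (1 - C) * hCs

/-- For every concurrence `C ∈ (0,1)`, the maximal degree of success of the FTI-based
argument, `(√(1−C²)/2)·(1 − √(1−C²))`, strictly exceeds the maximal success
probability of Hardy's original argument, `C²·(1−C)/(2−C)²`. -/
theorem stmt_19 (C : ℝ) (hC : C ∈ Set.Ioo 0 1) :
    C ^ 2 * (1 - C) / (2 - C) ^ 2 <
      Real.sqrt (1 - C ^ 2) / 2 * (1 - Real.sqrt (1 - C ^ 2)) := by
  obtain ⟨h0, h1⟩ := hC
  have hpos : 0 < 1 - C ^ 2 := by nlinarith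
  have hsq : Real.sqrt (1 - C ^ 2) ^ 2 = 1 - C ^ 2 := Real.sq_sqrt hpos.le
  have hlt : Real.sqrt (1 - C ^ 2) < 1 := (Real.sqrt_lt' one_pos).2 (by nlinarith)
  exact sq_mul_one_sub_div_lt_of_sq_add_sq h1 hlt (by linarith)
    (two_mul_one_sub_lt_sqrt_one_sub_sq_mul h0 h1)
end
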